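/- For every fixed t > 0, the function g(x) = 1 + x·(e^{t/x} - 1) is strictly decreasing in x on (0, ∞). -/

import Mathlib

open Real Set

/- Writing `u = t / x`, the function equals `1 + t · (e^u - 1) / u`, and `(e^u - 1) / u` is the
slope of the secant of the strictly convex function `exp` through `0`, hence strictly increasing
in `u`; as `u` decreases in `x`, the function decreases in `x`. -/

theorem exp_sub_one_div_strictMonoOn : StrictMonoOn (fun u : ℝ => (exp u - 1) / u) {0}ᶜ := by
  intro u hu v hv huv
  simpa using strictConvexOn_exp.secant_strict_mono (mem_univ 0) (mem_univ u) (mem_univ v) hu hv huv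

theorem mul_exp_div_sub_one_eq {t x : ℝ} (ht : t ≠ 0) (hx : x ≠ 0) :
    x * (exp (t / x) - 1) = t * ((exp (t / x) - 1) / (t / x)) := by
  field_simp

/-- For fixed `t > 0`, the function `x ↦ 1 + x(e^{t/x} - 1)` is strictly decreasing on
`(0, ∞)`. -/
theorem chernoff_aux_strict_anti (t : ℝ) (ht : 0 < t) :
    StrictAntiOn (fun x : ℝ => 1 + x * (Real.exp (t / x) - 1)) (Set.Ioi 0) := by
  intro x hx y hy hxy
  have hx : 0 < x := hx
  have hy : 0 < y := hy
  have hslope : (exp (t / y) - 1) / (t / y) < (exp (t / x) - 1) / (t / x) :=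
    exp_sub_one_div_strictMonoOn (div_pos ht hy).ne' (div_pos ht hx).ne'
      (div_lt_div_of_pos_left ht hx hxy)
  simp only [mul_exp_div_sub_one_eq ht.ne' hx.ne', mul_exp_div_sub_one_eq ht.ne' hy.ne']
  gcongr
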